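/- Let p and q be real numbers with p > q ≥ 1 and let u : EuclideanSpace ℝ (Fin n) → ℝ be a smooth positive function satisfying Δu + u^q − u^p = 0 on all of EuclideanSpace ℝ (Fin n). If there exists a constant c > (q−1)/(p−1) such that u(x)^{p−q} ≥ c for all x, and u is of polynomial growth (there exist C > 0 and N ∈ ℕ with |u(x)| ≤ C(1+‖x‖)^N for all x), then u is constant. -/

import Mathlib

open Real Filter

/-! ### Auxiliary lemmas -/

/-- At an interior local max of a smooth function of one variable, the second
derivative is nonpositive. -/
lemma second_deriv_nonpos_of_localmax {g : ℝ → ℝ} (hg : ContDiff ℝ (⊤ : ℕ∞) g)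
    (h : IsLocalMax g 0) : deriv (deriv g) 0 ≤ 0 := by
  by_contra hlt
  push_neg at hlt
  have hg1 : Differentiable ℝ g := hg.differentiable (by simp)
  have hgd : ContDiff ℝ (⊤ : ℕ∞) (deriv g) := (contDiff_infty_iff_deriv.mp hg).2
  have hgd1 : Differentiable ℝ (deriv g) := hgd.differentiable (by simp)
  have hcont : Continuous (deriv (deriv g)) := (contDiff_infty_iff_deriv.mp hgd).2.continuous
  have h0 : deriv g 0 = 0 := h.deriv_eq_zero
  have hev : ∀ᶠ t in nhds (0 : ℝ), 0 < deriv (deriv g) t :=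
    continuousAt_const.eventually_lt (hcont.continuousAt (x := 0)) hlt
  rw [Metric.eventually_nhds_iff] at hev
  obtain ⟨δ, hδ, hball⟩ := hev
  obtain ⟨δ', hδ', hmax⟩ := Metric.eventually_nhds_iff.mp h
  set r := min (δ/2) (δ'/2) with hr
  have hrpos : 0 < r := by positivity
  have hrδ : r < δ := by
    have := min_le_left (δ/2) (δ'/2); linarith
  have hmono : StrictMonoOn (deriv g) (Set.Icc 0 r) := by
    apply strictMonoOn_of_deriv_pos (convex_Icc 0 r) (hgd1.continuous.continuousOn)
    intro t ht
    rw [interior_Icc] at ht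
    apply hball
    simp only [Real.dist_eq, sub_zero]
    rw [abs_of_nonneg ht.1.le]; linarith [ht.2]
  have hmono2 : StrictMonoOn g (Set.Icc 0 r) := by
    apply strictMonoOn_of_deriv_pos (convex_Icc 0 r) (hg1.continuous.continuousOn)
    intro t ht
    rw [interior_Icc] at ht
    have : deriv g 0 < deriv g t := hmono ⟨le_rfl, hrpos.le⟩ ⟨ht.1.le, ht.2.le⟩ ht.1
    linarith [h0 ▸ this]
  have hgr : g 0 < g r := hmono2 ⟨le_rfl, hrpos.le⟩ ⟨hrpos.le, le_rfl⟩ hrpos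
  have : g r ≤ g 0 := by
    apply hmax
    simp only [Real.dist_eq, sub_zero]
    rw [abs_of_nonneg hrpos.le]
    have := min_le_right (δ/2) (δ'/2); linarith
  linarith

section Euclidean

variable {n : ℕ}
local notation "E" => EuclideanSpace ℝ (Fin n)

lemma line_hasDerivAt (x v : E) (t : ℝ) :
    HasDerivAt (fun s : ℝ => x + s • v) v t := by
  simpa using ((hasDerivAt_id t).smul_const v).const_add x

lemma contDiff_line (x v : E) : ContDiff ℝ (⊤ : ℕ∞) (fun s : ℝ => x + s • v) :=
  (contDiff_const.add ((contDiff_id).smul contDiff_const))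

lemma deriv_line {f : E → ℝ} (hf : ContDiff ℝ (⊤ : ℕ∞) f) (x v : E) :
    deriv (fun s : ℝ => f (x + s • v)) = fun t => fderiv ℝ f (x + t • v) v := by
  funext t
  have h1 : HasDerivAt (fun s : ℝ => f (x + s • v)) (fderiv ℝ f (x + t • v) v) t :=
    ((hf.differentiable (by simp) (x + t • v)).hasFDerivAt).comp_hasDerivAt t
      (line_hasDerivAt x v t)
  exact h1.deriv

lemma deriv2_line {f : E → ℝ} (hf : ContDiff ℝ (⊤ : ℕ∞) f) (x v : E) :
    deriv (deriv (fun s : ℝ => f (x + s • v))) 0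
      = fderiv ℝ (fun y => fderiv ℝ f y v) x v := by
  rw [deriv_line hf x v]
  have hfd : Differentiable ℝ (fderiv ℝ f) := by
    have h := (hf.fderiv_right (m := (⊤:ℕ∞)) (le_refl _)).differentiable (by simp)
    exact h
  have hG : Differentiable ℝ (fun y : E => fderiv ℝ f y v) := by
    exact fun y => ((ContinuousLinearMap.apply ℝ ℝ v).differentiable.comp hfd) y
  have h2 : HasDerivAt (fun t : ℝ => fderiv ℝ f (x + t • v) v)
      (fderiv ℝ (fun y => fderiv ℝ f y v) x v) 0 := by
    have := ((hG (x + (0:ℝ) • v)).hasFDerivAt).comp_hasDerivAt 0 (line_hasDerivAt x v 0)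
    rw [zero_smul, add_zero] at this
    exact this
  exact h2.deriv

end Euclidean

/-- The Euclidean Laplacian, as the trace of the second derivative. -/
noncomputable def eLap {n : ℕ} (v : EuclideanSpace ℝ (Fin n) → ℝ)
    (x : EuclideanSpace ℝ (Fin n)) : ℝ :=
  ∑ i : Fin n, fderiv ℝ (fun y => fderiv ℝ v y (EuclideanSpace.single i 1)) x
    (EuclideanSpace.single i 1)

/-- The weighted (drifted) Laplacian `Δ_f v = Δv − ⟨∇f, ∇v⟩`. -/
noncomputable def eLapF {n : ℕ} (f v : EuclideanSpace ℝ (Fin n) → ℝ)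
    (x : EuclideanSpace ℝ (Fin n)) : ℝ :=
  eLap v x - (inner ℝ (gradient f x) (gradient v x) : ℝ)

section Euclidean2

variable {n : ℕ}
local notation "E" => EuclideanSpace ℝ (Fin n)

lemma eLap_eq {f : E → ℝ} (hf : ContDiff ℝ (⊤ : ℕ∞) f) (x : E) :
    eLap f x = ∑ i : Fin n,
      deriv (deriv (fun s : ℝ => f (x + s • EuclideanSpace.single i 1))) 0 :=
  Finset.sum_congr rfl fun i _ => (deriv2_line hf x _).symm

lemma eLap_nonpos_of_localmax {f : E → ℝ} (hf : ContDiff ℝ (⊤ : ℕ∞) f) {z : E}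
    (h : IsLocalMax f z) : eLap f z ≤ 0 := by
  rw [eLap_eq hf]
  apply Finset.sum_nonpos
  intro i _
  set v := EuclideanSpace.single (𝕜 := ℝ) i (1:ℝ)
  apply second_deriv_nonpos_of_localmax (hf.comp (contDiff_line z v))
  have hL : Filter.Tendsto (fun s : ℝ => z + s • v) (nhds 0) (nhds z) := by
    have := (contDiff_line (n := n) z v).continuous.tendsto (0:ℝ)
    simpa using this
  have hev := hL.eventually h
  unfold IsLocalMax IsMaxFilter
  simpa using hev

lemma deriv1_combo {g h : ℝ → ℝ} (hg : Differentiable ℝ g) (hh : Differentiable ℝ h)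
    (α β c : ℝ) :
    deriv (fun t => α * g t + β * h t + c) = fun t => α * deriv g t + β * deriv h t := by
  funext t
  exact ((((hg t).hasDerivAt.const_mul α).add ((hh t).hasDerivAt.const_mul β)).add_const c).deriv

lemma deriv2_combo {g h : ℝ → ℝ} (hg : ContDiff ℝ (⊤ : ℕ∞) g) (hh : ContDiff ℝ (⊤ : ℕ∞) h)
    (α β c : ℝ) :
    deriv (deriv (fun t => α * g t + β * h t + c)) 0
      = α * deriv (deriv g) 0 + β * deriv (deriv h) 0 := by
  have hg1 : Differentiable ℝ g := hg.differentiable (by simp)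
  have hh1 : Differentiable ℝ h := hh.differentiable (by simp)
  have hgd : Differentiable ℝ (deriv g) :=
    (contDiff_infty_iff_deriv.mp hg).2.differentiable (by simp)
  have hhd : Differentiable ℝ (deriv h) :=
    (contDiff_infty_iff_deriv.mp hh).2.differentiable (by simp)
  rw [deriv1_combo hg1 hh1]
  have : (fun t => α * deriv g t + β * deriv h t)
      = fun t => α * deriv g t + β * deriv h t + 0 := by funext t; ring
  rw [this, deriv1_combo hgd hhd]

lemma eLap_combo {f g : E → ℝ} (hf : ContDiff ℝ (⊤:ℕ∞) f) (hg : ContDiff ℝ (⊤:ℕ∞) g)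
    (α β c : ℝ) (x : E) :
    eLap (fun y => α * f y + β * g y + c) x = α * eLap f x + β * eLap g x := by
  have hcomb : ContDiff ℝ (⊤:ℕ∞) (fun y => α * f y + β * g y + c) :=
    ((contDiff_const.mul hf).add (contDiff_const.mul hg)).add contDiff_const
  rw [eLap_eq hcomb, eLap_eq hf, eLap_eq hg, Finset.mul_sum, Finset.mul_sum,
    ← Finset.sum_add_distrib]
  apply Finset.sum_congr rfl
  intro i _
  have h := deriv2_combo (g := fun s : ℝ => f (x + s • EuclideanSpace.single i 1))
    (h := fun s : ℝ => g (x + s • EuclideanSpace.single i 1))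
    (hf.comp (contDiff_line x _)) (hg.comp (contDiff_line x _)) α β c
  simpa using h

/-! ### The barrier function -/

noncomputable def Wbar (a : ℝ) (x : E) : ℝ := ∑ i : Fin n, Real.cosh (a * x i)

lemma Wbar_contDiff (a : ℝ) : ContDiff ℝ (⊤ : ℕ∞) (Wbar a : E → ℝ) := by
  apply ContDiff.sum
  intro i _
  exact Real.contDiff_cosh.comp (contDiff_const.mul (EuclideanSpace.proj (𝕜 := ℝ) i).contDiff)

lemma Wbar_pos (a : ℝ) (hn : 0 < n) (x : E) : 0 < Wbar a x := by
  apply Finset.sum_pos (fun i _ => Real.cosh_pos _)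
  simpa [Finset.univ_nonempty_iff, Fin.pos_iff_nonempty] using Fin.pos_iff_nonempty.mp hn

lemma Wbar_line (a : ℝ) (x : E) (i : Fin n) (s : ℝ) :
    Wbar a (x + s • EuclideanSpace.single i 1)
      = Real.cosh (a * x i + a * s) + ∑ j ∈ Finset.univ.erase i, Real.cosh (a * x j) := by
  unfold Wbar
  rw [← Finset.add_sum_erase _ _ (Finset.mem_univ i)]
  congr 1
  · simp [PiLp.add_apply, PiLp.smul_apply, EuclideanSpace.single_apply, mul_add]
  · apply Finset.sum_congr rfl
    intro j hj
    have hji : j ≠ i := (Finset.mem_erase.mp hj).1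
    simp [PiLp.add_apply, PiLp.smul_apply, EuclideanSpace.single_apply, hji]

lemma deriv2_cosh_line (b c C : ℝ) :
    deriv (deriv (fun s : ℝ => Real.cosh (b + c * s) + (C:ℝ))) 0 = c^2 * Real.cosh b := by
  have h1 : ∀ t : ℝ, HasDerivAt (fun s : ℝ => Real.cosh (b + c * s) + (C:ℝ))
      (c * Real.sinh (b + c * t)) t := by
    intro t
    have hb : HasDerivAt (fun s : ℝ => b + c * s) c t := by
      simpa using ((hasDerivAt_id t).const_mul c).const_add b
    have := (Real.hasDerivAt_cosh (b + c * t)).comp t hb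
    simpa [mul_comm] using this.add_const C
  have hd1 : deriv (fun s : ℝ => Real.cosh (b + c * s) + (C:ℝ))
      = fun t => c * Real.sinh (b + c * t) := funext fun t => (h1 t).deriv
  rw [hd1]
  have h2 : HasDerivAt (fun t : ℝ => c * Real.sinh (b + c * t))
      (c * (c * Real.cosh (b + c * 0))) 0 := by
    have hb : HasDerivAt (fun s : ℝ => b + c * s) c 0 := by
      simpa using ((hasDerivAt_id 0).const_mul c).const_add b
    have := ((Real.hasDerivAt_sinh (b + c * 0)).comp 0 hb).const_mul c
    simpa [mul_comm, mul_assoc, mul_left_comm] using this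
  have := h2.deriv
  rw [this]; ring_nf

lemma eLap_Wbar (a : ℝ) (x : E) : eLap (Wbar a) x = a^2 * Wbar a x := by
  rw [eLap_eq (Wbar_contDiff a) x]
  have key : ∀ i : Fin n, deriv (deriv (fun s : ℝ => Wbar a (x + s • EuclideanSpace.single i 1))) 0
      = a^2 * Real.cosh (a * x i) := by
    intro i
    have hfun : (fun s : ℝ => Wbar a (x + s • EuclideanSpace.single i 1))
        = fun s : ℝ => Real.cosh (a * x i + a * s)
          + (∑ j ∈ Finset.univ.erase i, Real.cosh (a * x j) : ℝ) := by
      funext s; exact Wbar_line a x i s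
    rw [hfun, deriv2_cosh_line]
  rw [Finset.sum_congr rfl (fun i _ => key i)]
  unfold Wbar
  rw [Finset.mul_sum]

lemma exists_coord_ge (hn : 0 < n) (x : E) : ∃ i : Fin n, ‖x‖ ≤ Real.sqrt n * |x i| := by
  have hne : (Finset.univ : Finset (Fin n)).Nonempty := by
    simpa [Finset.univ_nonempty_iff] using Fin.pos_iff_nonempty.mp hn
  obtain ⟨i, _, hi⟩ := Finset.exists_max_image Finset.univ (fun j => |x j|) hne
  refine ⟨i, ?_⟩
  have hnorm : ‖x‖ = Real.sqrt (∑ j : Fin n, ‖x j‖^2) := EuclideanSpace.norm_eq x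
  have hsum : (∑ j : Fin n, ‖x j‖^2) ≤ n * |x i|^2 := by
    calc (∑ j : Fin n, ‖x j‖^2) ≤ ∑ _j : Fin n, |x i|^2 := by
          apply Finset.sum_le_sum
          intro j _
          rw [Real.norm_eq_abs]
          exact pow_le_pow_left₀ (abs_nonneg _) (hi j (Finset.mem_univ j)) 2
    _ = n * |x i|^2 := by simp [Finset.sum_const, nsmul_eq_mul]
  rw [hnorm]
  calc Real.sqrt (∑ j : Fin n, ‖x j‖^2) ≤ Real.sqrt (n * |x i|^2) :=
        Real.sqrt_le_sqrt hsum
  _ = Real.sqrt n * |x i| := by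
      rw [Real.sqrt_mul (Nat.cast_nonneg n), Real.sqrt_sq (abs_nonneg _)]

lemma Wbar_lower (hn : 0 < n) {a : ℝ} (ha : 0 < a) (x : E) :
    Real.exp (a / Real.sqrt n * ‖x‖) / 2 ≤ Wbar a x := by
  obtain ⟨i, hi⟩ := exists_coord_ge hn x
  have hsn : 0 < Real.sqrt n := Real.sqrt_pos.mpr (by exact_mod_cast hn)
  have h1 : a / Real.sqrt n * ‖x‖ ≤ |a * x i| := by
    rw [abs_mul, abs_of_pos ha]
    rw [div_mul_eq_mul_div, div_le_iff₀ hsn]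
    calc a * ‖x‖ ≤ a * (Real.sqrt n * |x i|) := by
          exact mul_le_mul_of_nonneg_left hi ha.le
    _ = a * |x i| * Real.sqrt n := by ring
  have h2 : Real.exp (a / Real.sqrt n * ‖x‖) / 2 ≤ Real.cosh (a * x i) := by
    rw [Real.cosh_eq]
    have hmono : Real.exp (a / Real.sqrt n * ‖x‖) ≤ Real.exp |a * x i| := Real.exp_le_exp.mpr h1
    have h3 : Real.exp |a * x i| ≤ Real.exp (a*x i) + Real.exp (-(a*x i)) := by
      rcases abs_cases (a*x i) with ⟨he,_⟩|⟨he,_⟩ <;> rw [he] <;>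
        linarith [Real.exp_pos (a*x i), Real.exp_pos (-(a*x i))]
    linarith
  calc Real.exp (a / Real.sqrt n * ‖x‖) / 2 ≤ Real.cosh (a * x i) := h2
  _ ≤ Wbar a x := by
      apply Finset.single_le_sum (fun j _ => (Real.cosh_pos (a * x j)).le) (Finset.mem_univ i)

end Euclidean2

/-! ### Scalar inequalities -/

lemma log_ge_one_sub_inv {t : ℝ} (ht : 0 < t) : 1 - 1/t ≤ Real.log t := by
  have h := Real.log_le_sub_one_of_pos (x := 1/t) (by positivity)
  rw [Real.log_div one_ne_zero (ne_of_gt ht), Real.log_one] at h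
  linarith

lemma rpow_sub_one_ge {t s : ℝ} (ht : 0 < t) (_hs : 0 ≤ s) :
    s * Real.log t ≤ t ^ s - 1 := by
  rw [Real.rpow_def_of_pos ht]
  have := Real.add_one_le_exp (Real.log t * s)
  nlinarith [this]

/-- For `t ≥ 1`: `t^p - t^q ≥ (p-q)(t-1)`. -/
lemma key_ineq_ge_one {p q t : ℝ} (hq : 1 ≤ q) (hpq : q < p) (ht : 1 ≤ t) :
    (p - q) * (t - 1) ≤ t ^ p - t ^ q := by
  have ht0 : 0 < t := lt_of_lt_of_le one_pos ht
  have hsplit : t ^ p - t ^ q = t ^ q * (t ^ (p - q) - 1) := by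
    rw [mul_sub, ← Real.rpow_add ht0]
    ring_nf
  have h1 : t ≤ t ^ q := by
    calc t = t ^ (1:ℝ) := (Real.rpow_one t).symm
    _ ≤ t ^ q := Real.rpow_le_rpow_of_exponent_le ht hq
  have h2 : (p - q) * ((t-1)/t) ≤ t ^ (p - q) - 1 := by
    calc (p - q) * ((t-1)/t) ≤ (p - q) * Real.log t := by
          apply mul_le_mul_of_nonneg_left _ (by linarith)
          have h := log_ge_one_sub_inv ht0
          have heq : (t-1)/t = 1 - 1/t := by field_simp
          linarith [heq ▸ h]
    _ ≤ t ^ (p - q) - 1 := rpow_sub_one_ge ht0 (by linarith)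
  have h2' : 0 ≤ t ^ (p-q) - 1 := by
    have : (1:ℝ) = 1 ^ (p-q) := (Real.one_rpow _).symm
    nlinarith [Real.rpow_le_rpow (by norm_num : (0:ℝ) ≤ 1) ht (by linarith : (0:ℝ) ≤ p - q)]
  calc (p - q) * (t - 1) = t * ((p-q) * ((t-1)/t)) := by field_simp
  _ ≤ t * (t ^ (p-q) - 1) := by
      apply mul_le_mul_of_nonneg_left h2 (by linarith)
  _ ≤ t ^ q * (t ^ (p-q) - 1) := mul_le_mul_of_nonneg_right h1 h2'
  _ = t ^ p - t ^ q := hsplit.symm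

/-- For `m ≤ t ≤ 1`, `0 < m`: `t^q - t^p ≥ (p-q) m^p (1-t)`. -/
lemma key_ineq_le_one {p q m t : ℝ} (hq : 1 ≤ q) (hpq : q < p) (hm : 0 < m)
    (htm : m ≤ t) (ht : t ≤ 1) :
    (p - q) * m ^ p * (1 - t) ≤ t ^ q - t ^ p := by
  have ht0 : 0 < t := lt_of_lt_of_le hm htm
  have hsplit : t ^ q - t ^ p = t ^ p * (t ^ (q - p) - 1) := by
    rw [mul_sub, ← Real.rpow_add ht0]
    ring_nf
  have hlog : Real.log t ≤ t - 1 := Real.log_le_sub_one_of_pos ht0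
  have h2 : (p - q) * (1 - t) ≤ t ^ (q - p) - 1 := by
    have := rpow_sub_one_ge (s := p - q) ht0 (by linarith)
    have hneg : (q - p) = -(p - q) := by ring
    rw [hneg, Real.rpow_neg ht0.le]
    have hpow_le : t ^ (p - q) ≤ 1 := by
      calc t ^ (p-q) = t ^ (p-q) := rfl
      _ ≤ 1 ^ (p-q) := Real.rpow_le_rpow ht0.le ht (by linarith)
      _ = 1 := Real.one_rpow _
    have hpow_pos : 0 < t ^ (p - q) := Real.rpow_pos_of_pos ht0 _
    have h3 : (p - q) * (1 - t) ≤ -((p-q) * Real.log t) := by nlinarith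
    have h4 : -((p-q) * Real.log t) ≤ (t ^ (p-q))⁻¹ - 1 := by
      have hi := rpow_sub_one_ge (t := t⁻¹) (s := p - q) (by positivity) (by linarith)
      rw [Real.log_inv, Real.inv_rpow ht0.le] at hi
      linarith
    linarith
  have hmp : m ^ p ≤ t ^ p := Real.rpow_le_rpow hm.le htm (by linarith)
  have h5 : 0 ≤ (p - q) * (1 - t) := by nlinarith
  calc (p - q) * m ^ p * (1 - t) = m ^ p * ((p-q) * (1-t)) := by ring
  _ ≤ t ^ p * ((p-q)*(1-t)) := mul_le_mul_of_nonneg_right hmp h5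
  _ ≤ t ^ p * (t ^ (q-p) - 1) := by
      apply mul_le_mul_of_nonneg_left h2 (Real.rpow_pos_of_pos ht0 _).le
  _ = t ^ q - t ^ p := hsplit.symm

lemma eventually_poly_le_exp {C b ε : ℝ} (hC : 0 < C) (hb : 0 < b) (hε : 0 < ε) (N : ℕ) :
    ∀ᶠ r : ℝ in atTop, C * (1 + r) ^ N ≤ ε * Real.exp (b * r) := by
  have hbt : Tendsto (fun r : ℝ => b * r) atTop atTop :=
    Tendsto.const_mul_atTop hb tendsto_id
  have h0 : Tendsto (fun r : ℝ => (b*r)^N * Real.exp (-(b*r))) atTop (nhds 0) :=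
    (tendsto_pow_mul_exp_neg_atTop_nhds_zero N).comp hbt
  set K := C * (2/b)^N with hK
  have hKpos : 0 < K := by positivity
  have h1 : ∀ᶠ r : ℝ in atTop, (b*r)^N * Real.exp (-(b*r)) ≤ ε / K :=
    h0.eventually_le_const (by positivity)
  filter_upwards [h1, eventually_ge_atTop (1:ℝ)] with r hr h1r
  have hrpos : (0:ℝ) < r := lt_of_lt_of_le one_pos h1r
  have hexp : 0 < Real.exp (b*r) := Real.exp_pos _
  have hstep : C * (1+r)^N ≤ K * (b*r)^N := by
    rw [hK]
    calc C * (1+r)^N ≤ C * (2*r)^N := by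
          apply mul_le_mul_of_nonneg_left _ hC.le
          exact pow_le_pow_left₀ (by linarith) (by linarith) N
    _ = C * (2/b)^N * (b*r)^N := by
        have hid : (2:ℝ)/b*(b*r) = 2*r := by field_simp
        rw [mul_assoc, ← mul_pow, hid]
  calc C * (1+r)^N ≤ K * (b*r)^N := hstep
  _ ≤ K * (ε / K * Real.exp (b*r)) := by
      apply mul_le_mul_of_nonneg_left _ hKpos.le
      calc (b*r)^N = (b*r)^N * Real.exp (-(b*r)) * Real.exp (b*r) := by
            rw [mul_assoc, ← Real.exp_add, neg_add_cancel, Real.exp_zero, mul_one]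
      _ ≤ ε/K * Real.exp (b*r) := mul_le_mul_of_nonneg_right hr hexp.le
  _ = ε * Real.exp (b*r) := by field_simp

/-! ### The main theorem -/

/-- The final Corollary of Section 3 of the paper on Euclidean space: a smooth positive
solution of `Δu + u^q − u^p = 0` on ℝⁿ, with `p > q ≥ 1`, satisfying `u^{p−q} ≥ c` for
some `c > (q−1)/(p−1)` and of polynomial growth, is constant. -/
theorem power_liouville (n : ℕ) (p q : ℝ) (hq : 1 ≤ q) (hpq : q < p)
    (u : EuclideanSpace ℝ (Fin n) → ℝ) (hu : ContDiff ℝ (⊤ : ℕ∞) u) (hpos : ∀ x, 0 < u x)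
    (heq : ∀ x, eLap u x + u x ^ q - u x ^ p = 0)
    (hc : ∃ c : ℝ, c > (q - 1) / (p - 1) ∧ ∀ x, u x ^ (p - q) ≥ c)
    (hgrowth : ∃ C : ℝ, 0 < C ∧ ∃ N : ℕ, ∀ x, |u x| ≤ C * (1 + ‖x‖) ^ N) :
    ∀ x y, u x = u y := by
  rcases Nat.eq_zero_or_pos n with hn0 | hn
  · subst hn0
    haveI : Subsingleton (EuclideanSpace ℝ (Fin 0)) :=
      ⟨fun a b => by ext i; exact Fin.elim0 i⟩
    intro x y
    rw [Subsingleton.elim x y]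
  obtain ⟨c, hcgt, hcb⟩ := hc
  obtain ⟨C, hC, N, hgr⟩ := hgrowth
  have hp1 : 1 < p := lt_of_le_of_lt hq hpq
  have hc0 : 0 < c :=
    lt_of_le_of_lt (div_nonneg (by linarith) (by linarith)) hcgt
  have hs : 0 < p - q := by linarith
  have huS : ContDiff ℝ (⊤:ℕ∞) u := hu.of_le (by simp)
  -- lower bound for u
  set m : ℝ := min (c ^ (1/(p-q))) 1 with hm
  have hm0 : 0 < m := lt_min (Real.rpow_pos_of_pos hc0 _) one_pos
  have hmu : ∀ x, m ≤ u x := by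
    intro x
    have h := hcb x
    have h2 : c ^ (1/(p-q)) ≤ (u x ^ (p-q)) ^ (1/(p-q)) :=
      Real.rpow_le_rpow hc0.le h (by positivity)
    rw [← Real.rpow_mul (hpos x).le, mul_one_div, div_self (ne_of_gt hs),
      Real.rpow_one] at h2
    exact le_trans (min_le_left _ _) h2
  -- constants
  set γ : ℝ := min (p - q) ((p - q) * m ^ p) with hγdef
  have hγ : 0 < γ := lt_min hs (mul_pos hs (Real.rpow_pos_of_pos hm0 p))
  set a : ℝ := Real.sqrt γ with ha_def
  have ha : 0 < a := Real.sqrt_pos.mpr hγ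
  have ha2 : a^2 = γ := Real.sq_sqrt hγ.le
  have hb : 0 < a / Real.sqrt n := by
    apply div_pos ha (Real.sqrt_pos.mpr (by exact_mod_cast hn))
  have heLapu : ∀ x, eLap u x = u x ^ p - u x ^ q := fun x => by linarith [heq x]
  -- Claim 1 : u ≤ 1
  have key1 : ∀ ε : ℝ, 0 < ε → ∀ x, u x - 1 ≤ ε * Wbar a x := by
    intro ε hε
    by_contra hcon
    push_neg at hcon
    obtain ⟨x₀, hx₀⟩ := hcon
    set F : EuclideanSpace ℝ (Fin n) → ℝ :=
      fun y => 1 * u y + (-ε) * Wbar a y + (-1) with hFdef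
    have hFval : ∀ y, F y = u y - ε * Wbar a y - 1 := fun y => by rw [hFdef]; ring
    have hF0 : 0 < F x₀ := by rw [hFval]; linarith
    have hFsmooth : ContDiff ℝ (⊤:ℕ∞) F :=
      ((contDiff_const.mul huS).add (contDiff_const.mul (Wbar_contDiff a))).add contDiff_const
    have hev : ∀ᶠ y in cocompact (EuclideanSpace ℝ (Fin n)), F y ≤ F x₀ := by
      have hev1 : ∀ᶠ r : ℝ in atTop,
          C * (1+r)^N ≤ (ε/2) * Real.exp ((a / Real.sqrt n) * r) :=
        eventually_poly_le_exp hC hb (by positivity) N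
      filter_upwards [tendsto_norm_cocompact_atTop.eventually hev1] with y hy
      have hu_le : u y ≤ C * (1+‖y‖)^N := le_trans (le_abs_self _) (hgr y)
      have hwl := Wbar_lower hn ha y
      have hw : (ε/2) * Real.exp ((a / Real.sqrt n)*‖y‖) ≤ ε * Wbar a y := by
        calc (ε/2) * Real.exp ((a / Real.sqrt n)*‖y‖)
            = ε * (Real.exp ((a / Real.sqrt n)*‖y‖) / 2) := by ring
        _ ≤ ε * Wbar a y := mul_le_mul_of_nonneg_left hwl hε.le
      have : F y ≤ 0 := by rw [hFval]; linarith
      linarith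
    obtain ⟨z, hz⟩ := hFsmooth.continuous.exists_forall_ge' x₀ hev
    have hmax : IsLocalMax F z := Filter.Eventually.of_forall fun y => hz y
    have hFz : 0 < F z := lt_of_lt_of_le hF0 (hz x₀)
    have hlap : eLap F z ≤ 0 := eLap_nonpos_of_localmax hFsmooth hmax
    have hcombo : eLap F z = 1 * eLap u z + (-ε) * eLap (Wbar a) z :=
      eLap_combo huS (Wbar_contDiff a) 1 (-ε) (-1) z
    rw [hcombo, heLapu z, eLap_Wbar, ha2] at hlap
    have hWz : 0 < Wbar a z := Wbar_pos a hn z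
    have huz : 1 < u z := by
      have := hFval z ▸ hFz
      nlinarith
    have h1 : (p - q) * (u z - 1) ≤ u z ^ p - u z ^ q := key_ineq_ge_one hq hpq huz.le
    have hγs : γ ≤ p - q := min_le_left _ _
    have h2 : γ * (u z - 1) ≤ (p - q) * (u z - 1) :=
      mul_le_mul_of_nonneg_right hγs (by linarith)
    have h3 : γ * (ε * Wbar a z) < γ * (u z - 1) := by
      apply mul_lt_mul_of_pos_left _ hγ
      have := hFval z ▸ hFz
      linarith
    nlinarith
  -- Claim 2 : u ≥ 1
  have key2 : ∀ ε : ℝ, 0 < ε → ∀ x, 1 - u x ≤ ε * Wbar a x := by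
    intro ε hε
    by_contra hcon
    push_neg at hcon
    obtain ⟨x₀, hx₀⟩ := hcon
    set F : EuclideanSpace ℝ (Fin n) → ℝ :=
      fun y => (-1) * u y + (-ε) * Wbar a y + 1 with hFdef
    have hFval : ∀ y, F y = 1 - u y - ε * Wbar a y := fun y => by rw [hFdef]; ring
    have hF0 : 0 < F x₀ := by rw [hFval]; linarith
    have hFsmooth : ContDiff ℝ (⊤:ℕ∞) F :=
      ((contDiff_const.mul huS).add (contDiff_const.mul (Wbar_contDiff a))).add contDiff_const
    have hev : ∀ᶠ y in cocompact (EuclideanSpace ℝ (Fin n)), F y ≤ F x₀ := by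
      have hev1 : ∀ᶠ r : ℝ in atTop,
          (1:ℝ) * (1+r)^0 ≤ (ε/2) * Real.exp ((a / Real.sqrt n) * r) :=
        eventually_poly_le_exp one_pos hb (by positivity) 0
      filter_upwards [tendsto_norm_cocompact_atTop.eventually hev1] with y hy
      simp only [pow_zero, mul_one] at hy
      have hwl := Wbar_lower hn ha y
      have hw : (ε/2) * Real.exp ((a / Real.sqrt n)*‖y‖) ≤ ε * Wbar a y := by
        calc (ε/2) * Real.exp ((a / Real.sqrt n)*‖y‖)
            = ε * (Real.exp ((a / Real.sqrt n)*‖y‖) / 2) := by ring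
        _ ≤ ε * Wbar a y := mul_le_mul_of_nonneg_left hwl hε.le
      have : F y ≤ 0 := by rw [hFval]; linarith [hpos y]
      linarith
    obtain ⟨z, hz⟩ := hFsmooth.continuous.exists_forall_ge' x₀ hev
    have hmax : IsLocalMax F z := Filter.Eventually.of_forall fun y => hz y
    have hFz : 0 < F z := lt_of_lt_of_le hF0 (hz x₀)
    have hlap : eLap F z ≤ 0 := eLap_nonpos_of_localmax hFsmooth hmax
    have hcombo : eLap F z = (-1) * eLap u z + (-ε) * eLap (Wbar a) z :=
      eLap_combo huS (Wbar_contDiff a) (-1) (-ε) 1 z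
    rw [hcombo, heLapu z, eLap_Wbar, ha2] at hlap
    have hWz : 0 < Wbar a z := Wbar_pos a hn z
    have huz : u z < 1 := by
      have := hFval z ▸ hFz
      nlinarith
    have h1 : (p - q) * m ^ p * (1 - u z) ≤ u z ^ q - u z ^ p :=
      key_ineq_le_one hq hpq hm0 (hmu z) huz.le
    have hγs : γ ≤ (p - q) * m ^ p := min_le_right _ _
    have h2 : γ * (1 - u z) ≤ (p - q) * m ^ p * (1 - u z) :=
      mul_le_mul_of_nonneg_right hγs (by linarith)
    have h3 : γ * (ε * Wbar a z) < γ * (1 - u z) := by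
      apply mul_lt_mul_of_pos_left _ hγ
      have := hFval z ▸ hFz
      linarith
    nlinarith
  -- conclude
  have hone : ∀ x, u x = 1 := by
    intro x
    have hWx : 0 < Wbar a x := Wbar_pos a hn x
    set Wx : ℝ := Wbar a x with hWxdef
    have hWne : Wx ≠ 0 := ne_of_gt hWx
    have hgen : ∀ d : ℝ, (∀ ε : ℝ, 0 < ε → d ≤ ε * Wx) → d ≤ 0 := by
      intro d hd
      by_contra hcon
      push_neg at hcon
      have hε : 0 < d / (2 * Wx) := div_pos hcon (by linarith)
      have h2 := hd _ hε
      have hval : d / (2 * Wx) * Wx = d / 2 := by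
        field_simp
      rw [hval] at h2
      linarith
    have h1 := hgen (u x - 1) (fun ε hε => key1 ε hε x)
    have h2 := hgen (1 - u x) (fun ε hε => key2 ε hε x)
    linarith
  intro x y
  rw [hone x, hone y]
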